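/- In the erasure game where neither player knows the state, the value of the game to Player A is 1/2: Player A must play action e, and min over q ∈ [0,1] of (q·0 + (1−q)·1 averaged over S) cannot exceed 1/2, which is attained. -/

import Mathlib

/-- Player A's actions in the erasure game: 0, e (erasure), 1. -/
inductive ActA | a0 | ae | a1
deriving DecidableEq

instance : Fintype ActA where
  elems := {ActA.a0, ActA.ae, ActA.a1}
  complete := by intro x; cases x <;> simp

/-- Payoff to Player A in the erasure game with penalty `M`, where the state
`s : Bool` (false = 0, true = 1) and Player B's action `b : Bool`. -/
noncomputable def payoff (M : ℝ) (a : ActA) (b s : Bool) : ℝ :=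
  match a with
  | .a0 => if s then -M else (if b then 0 else 3)
  | .a1 => if s then (if b then 3 else 0) else -M
  | .ae => if b = s then 0 else 1

/-- `p` is a probability distribution on a finite set. -/
def IsDist {α : Type*} [Fintype α] (p : α → ℝ) : Prop :=
  (∀ x, 0 ≤ p x) ∧ ∑ x, p x = 1

/-- Expected payoff when neither player knows the uniform state. -/
noncomputable def expPay (M : ℝ) (pa : ActA → ℝ) (pb : Bool → ℝ) : ℝ :=
  (1/2) * ∑ s : Bool, ∑ a : ActA, ∑ b : Bool, pa a * pb b * payoff M a b s

theorem ActA.sum_eq {β : Type*} [AddCommMonoid β] (f : ActA → β) :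
    ∑ a, f a = f .a0 + f .ae + f .a1 := by
  rw [show (Finset.univ : Finset ActA) = {.a0, .ae, .a1} from rfl,
    Finset.sum_insert (by decide), Finset.sum_pair (by decide), add_assoc]

theorem isDist_pi_single {α : Type*} [Fintype α] [DecidableEq α] (x : α) :
    IsDist (Pi.single x 1 : α → ℝ) :=
  ⟨fun y => by by_cases h : y = x <;> simp [h], by simp⟩

theorem isDist_const_inv_card {α : Type*} [Fintype α] [Nonempty α] :
    IsDist (fun _ : α => (Fintype.card α : ℝ)⁻¹) :=
  ⟨fun _ => by positivity, by simp⟩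

theorem expPay_eq (M : ℝ) (pa : ActA → ℝ) (pb : Bool → ℝ) :
    expPay M pa pb = (1/2) * (pa .a0 * (3 * pb false - M * (pb false + pb true))
      + pa .ae * (pb false + pb true) + pa .a1 * (3 * pb true - M * (pb false + pb true))) := by
  simp only [expPay, payoff, Fintype.sum_bool, ActA.sum_eq]
  simp only [Bool.false_eq_true, if_true, if_false, Bool.true_eq_false]
  ring

/- The erasure pays 1 exactly when B's action differs from the state, which against a uniform,
unobserved state happens with probability 1/2 whatever B does. -/
theorem expPay_erasure (M : ℝ) {pb : Bool → ℝ} (hpb : IsDist pb) :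
    expPay M (Pi.single .ae 1) pb = 1/2 := by
  have hsum : pb false + pb true = 1 := by simpa [Fintype.sum_bool, add_comm] using hpb.2
  simp [expPay_eq, hsum]

/- Against the uniform mix of B, each of the guesses 0 and 1 is worth (3/2 - M)/2 ≤ 1/2. -/
theorem expPay_uniform_le {M : ℝ} (hM : 1/2 ≤ M) {pa : ActA → ℝ} (hpa : IsDist pa) :
    expPay M pa (fun _ => 1/2) ≤ 1/2 := by
  have hsum : pa .a0 + pa .ae + pa .a1 = 1 := by simpa [ActA.sum_eq] using hpa.2
  have hguess : 0 ≤ pa .a0 + pa .a1 := add_nonneg (hpa.1 _) (hpa.1 _)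
  rw [expPay_eq]
  nlinarith

/-- If neither player knows the state, the max-min value of the erasure game is 1/2
(for all sufficiently large penalty M). -/
theorem stmt3 : ∃ M0 : ℝ, ∀ M ≥ M0,
    (∃ pa : ActA → ℝ, IsDist pa ∧
      ∀ pb : Bool → ℝ, IsDist pb → expPay M pa pb ≥ 1/2) ∧
    (∀ pa : ActA → ℝ, IsDist pa →
      ∃ pb : Bool → ℝ, IsDist pb ∧ expPay M pa pb ≤ 1/2) := by
  refine ⟨1/2, fun M hM => ⟨?_, ?_⟩⟩
  · exact ⟨Pi.single .ae 1, isDist_pi_single _, fun pb hpb => (expPay_erasure M hpb).ge⟩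
  · intro pa hpa
    refine ⟨fun _ => 1/2, ?_, expPay_uniform_le hM hpa⟩
    simpa using (isDist_const_inv_card : IsDist fun _ : Bool => _)
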